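/- Let 𝒞 be a normal category. A morphism is a subobject-essential monomorphism if and only if it is a pullback stable essential monomorphism, i.e., Mono_SE(𝒞) = St(Mono_E(𝒞)). -/

import Mathlib

open CategoryTheory CategoryTheory.Limits

universe v u

variable (C : Type u) [Category.{v} C]

/-- A normal category: a pointed regular category (pullback-stable
(regular epi, mono) factorizations) in which every regular epimorphism is a
normal epimorphism. -/
class IsNormalCategory [HasFiniteLimits C] [HasZeroObject C]
    [HasZeroMorphisms C] : Prop where
  /-- every morphism factors as a regular epimorphism followed by a monomorphism -/
  fac : ∀ ⦃X Y : C⦄ (f : X ⟶ Y), ∃ (I : C) (e : X ⟶ I) (i : I ⟶ Y),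
    Nonempty (RegularEpi e) ∧ Mono i ∧ e ≫ i = f
  /-- regular epimorphisms are stable under pullback -/
  stable : ∀ ⦃U X M A : C⦄ (p : U ⟶ M) (u : U ⟶ X) (m : M ⟶ A) (x : X ⟶ A),
    IsPullback p u m x → Nonempty (RegularEpi m) → Nonempty (RegularEpi u)
  /-- every regular epimorphism is a normal epimorphism -/
  normalEpi : ∀ ⦃X Y : C⦄ (f : X ⟶ Y), Nonempty (RegularEpi f) →
    Nonempty (NormalEpi f)

variable {C}

/-- An essential monomorphism: a monomorphism `m` such that `f` is a
monomorphism whenever `m ≫ f` is. -/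
def EssentialMono : MorphismProperty C :=
  fun _ A m => Mono m ∧ ∀ ⦃B : C⦄ (f : A ⟶ B), Mono (m ≫ f) → Mono f

/-- A subobject-essential monomorphism: a monomorphism `m : M ⟶ A` such that
for every monomorphism `n : N ⟶ A`, if `M ×_A N = 0` then `N = 0`. -/
def SubobjEssential [HasFiniteLimits C] [HasZeroObject C] [HasZeroMorphisms C] :
    MorphismProperty C :=
  fun _ A m => Mono m ∧ ∀ ⦃N : C⦄ (n : N ⟶ A), Mono n →
    IsZero (pullback m n) → IsZero N

/-- The stabilization of a class of morphisms: `m` belongs to `Stab P` iff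
every pullback of `m` along any morphism belongs to `P`. -/
def Stab (P : MorphismProperty C) : MorphismProperty C :=
  fun _ A m => ∀ ⦃U X : C⦄ (p : U ⟶ _) (u : U ⟶ X) (x : X ⟶ A),
    IsPullback p u m x → P u

/-- In a normal category, a morphism is a subobject-essential monomorphism iff
it is a pullback stable essential monomorphism:
In a normal category, a morphism whose kernel is zero is a monomorphism. -/
theorem mono_of_isZero_kernel' [HasFiniteLimits C] [HasZeroObject C]
    [HasZeroMorphisms C] [IsNormalCategory C] {X B : C} (f : X ⟶ B)
    (hK : IsZero (kernel f)) : Mono f := by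
  obtain ⟨I, e, i, ⟨re⟩, mi, hfac⟩ := IsNormalCategory.fac f
  obtain ⟨ne⟩ := IsNormalCategory.normalEpi e ⟨re⟩
  have hg : ne.g ≫ f = 0 := by
    rw [← hfac, ← Category.assoc, ne.w, zero_comp]
  have hgz : ne.g = 0 := by
    have h1 : ne.g = kernel.lift f ne.g hg ≫ kernel.ι f := by simp
    have h2 : kernel.lift f ne.g hg = 0 := hK.eq_zero_of_tgt _
    rw [h1, h2, zero_comp]
  -- `e` is the cokernel of the zero map, hence split mono
  obtain ⟨s, hs⟩ := CokernelCofork.IsColimit.desc' ne.isColimit (𝟙 X)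
    (by rw [hgz, zero_comp])
  have : IsSplitMono e := ⟨⟨⟨s, hs⟩⟩⟩
  have : Mono e := inferInstance
  rw [← hfac]
  exact mono_comp e i

/-- A monomorphism which is zero has zero source. -/
theorem isZero_of_mono_zero [HasZeroMorphisms C] {X Y : C} (f : X ⟶ Y)
    (hm : Mono f) (hf : f = 0) : IsZero X := by
  rw [IsZero.iff_id_eq_zero]
  have := hm
  rw [← cancel_mono f, hf, comp_zero, comp_zero]

/-- In a normal category, a morphism is a subobject-essential monomorphism iff
it is a pullback stable essential monomorphism:
`Mono_SE(𝒞) = St(Mono_E(𝒞))`. -/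
theorem subobjEssential_eq_stab_essential [HasFiniteLimits C] [HasZeroObject C]
    [HasZeroMorphisms C] [IsNormalCategory C] :
    (SubobjEssential : MorphismProperty C) = Stab EssentialMono := by
  funext M A m
  ext
  constructor
  · rintro ⟨hm, hse⟩ U X p u x hP
    have : Mono m := hm
    have hu : Mono u := by
      have := hP.isoPullback_hom_snd
      rw [← this]
      exact mono_comp _ _
    refine ⟨hu, ?_⟩
    intro B f hf
    -- show the kernel of f is zero
    set K := kernel f with hKdef
    set k : K ⟶ X := kernel.ι f with hkdef
    -- factor k ≫ x
    obtain ⟨N, e, n, ⟨re⟩, hn, hfac⟩ := IsNormalCategory.fac (k ≫ x)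
    -- V := pullback of u along k
    set V := pullback u k with hVdef
    set q : V ⟶ U := pullback.fst u k with hqdef
    set v : V ⟶ K := pullback.snd u k with hvdef
    have hVP : IsPullback q v u k := IsPullback.of_hasPullback u k
    have hq : q = 0 := by
      rw [← cancel_mono (u ≫ f), zero_comp, ← Category.assoc,
        hVP.w, Category.assoc, kernel.condition, comp_zero]
    -- big pullback square
    have hbig : IsPullback (q ≫ p) v m (k ≫ x) := hVP.paste_horiz hP
    -- W := pullback m n
    set W := pullback m n with hWdef
    set w₁ : W ⟶ M := pullback.fst m n with hw1def
    set w₂ : W ⟶ N := pullback.snd m n with hw2def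
    have hWP : IsPullback w₁ w₂ m n := IsPullback.of_hasPullback m n
    have hcomm : (q ≫ p) ≫ m = (v ≫ e) ≫ n := by
      rw [hbig.w, Category.assoc, hfac]
    set φ : V ⟶ W := pullback.lift (q ≫ p) (v ≫ e) hcomm with hφdef
    have hφ1 : φ ≫ w₁ = q ≫ p := pullback.lift_fst _ _ _
    have hφ2 : φ ≫ w₂ = v ≫ e := pullback.lift_snd _ _ _
    have hbig' : IsPullback (φ ≫ w₁) v m (e ≫ n) := by
      rw [hφ1, hfac]; exact hbig
    have hleft : IsPullback φ v w₂ e := IsPullback.of_right hbig' hφ2 hWP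
    obtain ⟨reφ⟩ := IsNormalCategory.stable v φ e w₂ hleft.flip ⟨re⟩
    haveI := reφ
    have hφepi : Epi φ := RegularEpi.epi φ reφ
    have hw1 : w₁ = 0 := by
      rw [← cancel_epi φ, hφ1, hq, zero_comp, comp_zero]
    have hw2 : w₂ = 0 := by
      have : Mono n := hn
      rw [← cancel_mono n, ← hWP.w, hw1, zero_comp, zero_comp]
    have hw2mono : Mono w₂ := inferInstance
    have hWzero : IsZero W := isZero_of_mono_zero w₂ hw2mono hw2
    have hNzero : IsZero N := hse n hn hWzero
    have hkx : k ≫ x = 0 := by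
      rw [← hfac, hNzero.eq_zero_of_src n, comp_zero]
    -- lift k through u
    set ℓ : K ⟶ U := hP.lift 0 k (by rw [zero_comp, hkx]) with hℓdef
    have hℓu : ℓ ≫ u = k := hP.lift_snd _ _ _
    have hℓ : ℓ = 0 := by
      rw [← cancel_mono (u ≫ f), zero_comp, ← Category.assoc, hℓu,
        kernel.condition]
    have hk : k = 0 := by rw [← hℓu, hℓ, zero_comp]
    have hKzero : IsZero K := isZero_of_mono_zero k inferInstance hk
    exact mono_of_isZero_kernel' f hKzero
  · intro h
    have hid : IsPullback (𝟙 M) m m (𝟙 A) :=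
      IsPullback.of_horiz_isIso ⟨by simp⟩
    have hm : Mono m := (h _ _ _ hid).1
    refine ⟨hm, ?_⟩
    intro N n hn hz
    have hP : IsPullback (pullback.fst m n) (pullback.snd m n) m n :=
      IsPullback.of_hasPullback m n
    obtain ⟨_, hess⟩ := h _ _ _ hP
    open ZeroObject in
    have hmono : Mono (pullback.snd m n ≫ (0 : N ⟶ (0 : C))) := by
      constructor
      intro T g g' _
      exact hz.eq_of_tgt _ _
    open ZeroObject in
    have : Mono (0 : N ⟶ (0 : C)) := hess _ hmono
    rw [IsZero.iff_id_eq_zero]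
    rw [← cancel_mono (0 : N ⟶ (0 : C))]
    open ZeroObject in
    exact (isZero_zero C).eq_of_tgt _ _
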